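/- Incremental remote current from prefault local measurements: suppose the hypotheses of the operating-point independence result hold (fault-time and prefault network equations, v_S = v_S', i_C = i_C', and Y_LHS invertible), so that x = (ṽ_F, ṽ_J, ṽ_C, ĩ_S) = Y_LHS⁻¹ ⬝ Y_RHS ⬝ v_F'. Suppose further that the prefault fault-bus voltage satisfies the prefault line KVL v_F' = v_L' − (m_T·z) • i_L', where v_L', i_L' : nF → ℂ are the prefault local voltage and current, z ∈ ℂ with z ≠ 0, and m_T ∈ ℝ with m_T ≠ 1. Let D_R, D_F : Matrix (Fin 3) ι ℂ be extraction matrices for the remote-bus and fault-bus voltage components. Then the incremental remote current σ := (1/((1−m_T)·z)) • (D_R ⬝ x − D_F ⬝ x) satisfies σ = Ω ⬝ (v_L', i_L'), where Ω : Matrix (Fin 3) (nF ⊕ nF) ℂ is the matrix (1/((1−m_T)·z)) • (D_R − D_F) ⬝ Y_LHS⁻¹ ⬝ Y_RHS ⬝ [I, −(m_T·z)•I]. In particular, σ is a linear function of the prefault local measurements (v_L(t−δ), i_L(t−δ)) whose coefficients depend only on m_T, m_F, z, and the network matrices. -/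

import Mathlib

open Matrix

/-- Assemble a vector on `ι = nF ⊕ nJ ⊕ nC ⊕ nS` from its four blocks. -/
def blockVec {nF nJ nC nS : Type*} (xF : nF → ℂ) (xJ : nJ → ℂ) (xC : nC → ℂ)
    (xS : nS → ℂ) : nF ⊕ nJ ⊕ nC ⊕ nS → ℂ :=
  Sum.elim xF (Sum.elim xJ (Sum.elim xC xS))

/-- The correction matrix `B`: `Y_F` in the (F,F) block, `Y_J` in the (J,J)
block, `−Y_C` in the (C,C) block, the S block-column equal to `−I_S − Y_{·,S}`
(where `I_S` has the identity in the S rows and zeros elsewhere and `Y_{·,S}`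
is the S block-column of `Y`), and zeros in all other blocks.  Then
`Y_LHS = Y + B`. -/
def Bmat {nF nJ nC nS : Type*}
    [DecidableEq nF] [DecidableEq nJ] [DecidableEq nC] [DecidableEq nS]
    (Y : Matrix (nF ⊕ nJ ⊕ nC ⊕ nS) (nF ⊕ nJ ⊕ nC ⊕ nS) ℂ)
    (YF : Matrix nF nF ℂ) (YJ : Matrix nJ nJ ℂ) (YC : Matrix nC nC ℂ) :
    Matrix (nF ⊕ nJ ⊕ nC ⊕ nS) (nF ⊕ nJ ⊕ nC ⊕ nS) ℂ :=
  Matrix.of fun r c =>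
    match r, c with
    | r', Sum.inr (Sum.inr (Sum.inr s)) =>
        -(if r' = Sum.inr (Sum.inr (Sum.inr s)) then 1 else 0)
          - Y r' (Sum.inr (Sum.inr (Sum.inr s)))
    | Sum.inl i, Sum.inl j => YF i j
    | Sum.inr (Sum.inl i), Sum.inr (Sum.inl j) => YJ i j
    | Sum.inr (Sum.inr (Sum.inl i)), Sum.inr (Sum.inr (Sum.inl j)) => -YC i j
    | _, _ => 0

/-- The right-hand-side matrix `Y_RHS`: `−Y_F` in the F rows, zeros elsewhere. -/
def YRHSmat {nF nJ nC nS : Type*} (YF : Matrix nF nF ℂ) :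
    Matrix (nF ⊕ nJ ⊕ nC ⊕ nS) nF ℂ :=
  Matrix.of fun r j =>
    match r with
    | Sum.inl i => -YF i j
    | _ => 0

/-! Subtracting the prefault network equations from the fault-time ones cancels the unknown
operating point: since `v_S = v_S'` and `i_C = i_C'`, the increments satisfy
`Y_LHS ⬝ x = Y_RHS ⬝ v_F'` (operating-point independence). Inverting `Y_LHS` and substituting
the prefault line KVL for `v_F'` makes `σ` linear in `(v_L', i_L')`. -/

section NetworkEquations

variable {nF nJ nC nS : Type*}

lemma blockVec_add (a a' : nF → ℂ) (b b' : nJ → ℂ) (c c' : nC → ℂ) (d d' : nS → ℂ) :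
    blockVec a b c d + blockVec a' b' c' d' = blockVec (a + a') (b + b') (c + c') (d + d') := by
  funext r; rcases r with i | j | k | s <;> rfl

lemma blockVec_sub (a a' : nF → ℂ) (b b' : nJ → ℂ) (c c' : nC → ℂ) (d d' : nS → ℂ) :
    blockVec a b c d - blockVec a' b' c' d' = blockVec (a - a') (b - b') (c - c') (d - d') := by
  funext r; rcases r with i | j | k | s <;> rfl

lemma YRHSmat_mulVec [Fintype nF] (YF : Matrix nF nF ℂ) (v : nF → ℂ) :
    (YRHSmat YF : Matrix (nF ⊕ nJ ⊕ nC ⊕ nS) nF ℂ) *ᵥ v = blockVec (-(YF *ᵥ v)) 0 0 0 := by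
  funext r
  rcases r with i | j | k | s <;> simp [YRHSmat, blockVec, mulVec, dotProduct]

variable [Fintype nF] [Fintype nJ] [Fintype nC] [Fintype nS]

/-- In `Y_LHS = Y + B` the S unknowns are the generator currents, not the voltages. -/
lemma add_Bmat_mulVec_blockVec [DecidableEq nF] [DecidableEq nJ] [DecidableEq nC]
    [DecidableEq nS] (Y : Matrix (nF ⊕ nJ ⊕ nC ⊕ nS) (nF ⊕ nJ ⊕ nC ⊕ nS) ℂ)
    (YF : Matrix nF nF ℂ) (YJ : Matrix nJ nJ ℂ) (YC : Matrix nC nC ℂ)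
    (a : nF → ℂ) (b : nJ → ℂ) (c : nC → ℂ) (d : nS → ℂ) :
    (Y + Bmat Y YF YJ YC) *ᵥ blockVec a b c d =
      Y *ᵥ blockVec a b c 0 + blockVec (YF *ᵥ a) (YJ *ᵥ b) (-(YC *ᵥ c)) (-d) := by
  funext r
  rcases r with i | j | k | s <;>
    simp [Bmat, blockVec, mulVec, dotProduct, Fintype.sum_sum_type, add_mul, sub_mul,
      Finset.sum_add_distrib, ite_mul] <;> ring

lemma add_Bmat_mulVec_incremental [DecidableEq nF] [DecidableEq nJ] [DecidableEq nC]
    [DecidableEq nS] (Y : Matrix (nF ⊕ nJ ⊕ nC ⊕ nS) (nF ⊕ nJ ⊕ nC ⊕ nS) ℂ)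
    (YF : Matrix nF nF ℂ) (YJ : Matrix nJ nJ ℂ) (YC : Matrix nC nC ℂ)
    (vF vF' : nF → ℂ) (vJ vJ' : nJ → ℂ) (vC vC' : nC → ℂ) (vS : nS → ℂ)
    (iC : nC → ℂ) (iS iS' : nS → ℂ)
    (hfault : Y *ᵥ blockVec vF vJ vC vS =
      blockVec (-(YF *ᵥ vF)) (-(YJ *ᵥ vJ)) (iC + YC *ᵥ vC) iS)
    (hpre : Y *ᵥ blockVec vF' vJ' vC' vS =
      blockVec 0 (-(YJ *ᵥ vJ')) (iC + YC *ᵥ vC') iS') :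
    (Y + Bmat Y YF YJ YC) *ᵥ blockVec (vF - vF') (vJ - vJ') (vC - vC') (iS - iS') =
      YRHSmat YF *ᵥ vF' := by
  have hdiff : Y *ᵥ blockVec (vF - vF') (vJ - vJ') (vC - vC') 0 =
      blockVec (-(YF *ᵥ vF)) (YJ *ᵥ vJ' - YJ *ᵥ vJ) (YC *ᵥ vC - YC *ᵥ vC') (iS - iS') := by
    rw [← sub_self vS, ← blockVec_sub, mulVec_sub, hfault, hpre, blockVec_sub]
    congr 1 <;> abel
  rw [add_Bmat_mulVec_blockVec, hdiff, blockVec_add, YRHSmat_mulVec]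
  simp only [mulVec_sub]
  congr 1 <;> abel

end NetworkEquations

lemma fromCols_one_smul_one_mulVec_sumElim {n R : Type*} [Fintype n] [DecidableEq n]
    [Ring R] (c : R) (u w : n → R) :
    fromCols (1 : Matrix n n R) (-c • 1) *ᵥ Sum.elim u w = u - c • w := by
  rw [fromCols_mulVec_sumElim, one_mulVec, smul_mulVec, one_mulVec, neg_smul, sub_eq_add_neg]

theorem incremental_remote_current_general
    {nJ nC nS : Type*} [Fintype nJ] [Fintype nC] [Fintype nS]
    [DecidableEq nJ] [DecidableEq nC] [DecidableEq nS]
    (Y : Matrix (Fin 3 ⊕ nJ ⊕ nC ⊕ nS) (Fin 3 ⊕ nJ ⊕ nC ⊕ nS) ℂ)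
    (YF : Matrix (Fin 3) (Fin 3) ℂ) (YJ : Matrix nJ nJ ℂ) (YC : Matrix nC nC ℂ)
    (vF vF' : Fin 3 → ℂ) (vJ vJ' : nJ → ℂ) (vC vC' : nC → ℂ) (vS vS' : nS → ℂ)
    (iC iC' : nC → ℂ) (iS iS' : nS → ℂ)
    (vL' iL' : Fin 3 → ℂ) (z : ℂ) (m_T : ℝ)
    (D_R D_F : Matrix (Fin 3) (Fin 3 ⊕ nJ ⊕ nC ⊕ nS) ℂ)
    (x : Fin 3 ⊕ nJ ⊕ nC ⊕ nS → ℂ) (σ : Fin 3 → ℂ)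
    (hfault : Y *ᵥ blockVec vF vJ vC vS =
      blockVec (-(YF *ᵥ vF)) (-(YJ *ᵥ vJ)) (iC + YC *ᵥ vC) iS)
    (hpre : Y *ᵥ blockVec vF' vJ' vC' vS' =
      blockVec 0 (-(YJ *ᵥ vJ')) (iC' + YC *ᵥ vC') iS')
    (hvS : vS = vS') (hiC : iC = iC')
    (hinv : IsUnit (Y + Bmat Y YF YJ YC))
    (hx : x = blockVec (vF - vF') (vJ - vJ') (vC - vC') (iS - iS'))
    (hlineKVL : vF' = vL' - ((m_T : ℂ) * z) • iL')
    (hσ : σ = (1 / ((1 - (m_T : ℂ)) * z)) • (D_R *ᵥ x - D_F *ᵥ x)) :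
    σ = ((1 / ((1 - (m_T : ℂ)) * z)) •
        (((D_R - D_F) * (Y + Bmat Y YF YJ YC)⁻¹ * YRHSmat YF :
            Matrix (Fin 3) (Fin 3) ℂ) *
          (Matrix.fromCols (1 : Matrix (Fin 3) (Fin 3) ℂ)
            (-((m_T : ℂ) * z) • (1 : Matrix (Fin 3) (Fin 3) ℂ)) :
              Matrix (Fin 3) (Fin 3 ⊕ Fin 3) ℂ))) *ᵥ
      Sum.elim vL' iL' := by
  subst hvS hiC
  obtain ⟨_⟩ := hinv.nonempty_invertible
  have hx_solve : x = (Y + Bmat Y YF YJ YC)⁻¹ *ᵥ (YRHSmat YF *ᵥ vF') := by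
    rw [hx, inv_mulVec_eq_vec
      (add_Bmat_mulVec_incremental Y YF YJ YC vF vF' vJ vJ' vC vC' vS iC iS iS' hfault hpre).symm]
  have hvF' : fromCols 1 (-((m_T : ℂ) * z) • 1) *ᵥ Sum.elim vL' iL' = vF' := by
    rw [fromCols_one_smul_one_mulVec_sumElim, hlineKVL]
  rw [hσ, ← sub_mulVec, hx_solve, ← hvF', mulVec_mulVec, mulVec_mulVec, mulVec_mulVec,
    smul_mulVec]
  -- the two sides differ only in instance paths
  rfl

/-- **Incremental remote current from prefault local measurements.**
Under the hypotheses of the operating-point independence result, if moreover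
the prefault line KVL `v_F' = v_L' − (m_T·z) • i_L'` holds with `z ≠ 0` and
`m_T ≠ 1`, then the incremental remote current
`σ = (1/((1−m_T)·z)) • (D_R ⬝ x − D_F ⬝ x)` is the linear function
`σ = Ω ⬝ (v_L', i_L')` of the prefault local measurements, where
`Ω = (1/((1−m_T)·z)) • (D_R − D_F) ⬝ Y_LHS⁻¹ ⬝ Y_RHS ⬝ [I, −(m_T·z)•I]`. -/
theorem incremental_remote_current
    {nJ nC nS : Type*} [Fintype nJ] [Fintype nC] [Fintype nS]
    [DecidableEq nJ] [DecidableEq nC] [DecidableEq nS]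
    (Y : Matrix (Fin 3 ⊕ nJ ⊕ nC ⊕ nS) (Fin 3 ⊕ nJ ⊕ nC ⊕ nS) ℂ)
    (YF : Matrix (Fin 3) (Fin 3) ℂ) (YJ : Matrix nJ nJ ℂ) (YC : Matrix nC nC ℂ)
    (vF vF' : Fin 3 → ℂ) (vJ vJ' : nJ → ℂ) (vC vC' : nC → ℂ) (vS vS' : nS → ℂ)
    (iC iC' : nC → ℂ) (iS iS' : nS → ℂ)
    (vL' iL' : Fin 3 → ℂ) (z : ℂ) (m_T : ℝ)
    (D_R D_F : Matrix (Fin 3) (Fin 3 ⊕ nJ ⊕ nC ⊕ nS) ℂ)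
    (x : Fin 3 ⊕ nJ ⊕ nC ⊕ nS → ℂ) (σ : Fin 3 → ℂ)
    (hfault : Y *ᵥ blockVec vF vJ vC vS =
      blockVec (-(YF *ᵥ vF)) (-(YJ *ᵥ vJ)) (iC + YC *ᵥ vC) iS)
    (hpre : Y *ᵥ blockVec vF' vJ' vC' vS' =
      blockVec 0 (-(YJ *ᵥ vJ')) (iC' + YC *ᵥ vC') iS')
    (hvS : vS = vS') (hiC : iC = iC')
    (hinv : IsUnit (Y + Bmat Y YF YJ YC))
    (hx : x = blockVec (vF - vF') (vJ - vJ') (vC - vC') (iS - iS'))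
    (hz : z ≠ 0) (hmT : m_T ≠ 1)
    (hlineKVL : vF' = vL' - ((m_T : ℂ) * z) • iL')
    (hσ : σ = (1 / ((1 - (m_T : ℂ)) * z)) • (D_R *ᵥ x - D_F *ᵥ x)) :
    σ = ((1 / ((1 - (m_T : ℂ)) * z)) •
        (((D_R - D_F) * (Y + Bmat Y YF YJ YC)⁻¹ * YRHSmat YF :
            Matrix (Fin 3) (Fin 3) ℂ) *
          (Matrix.fromCols (1 : Matrix (Fin 3) (Fin 3) ℂ)
            (-((m_T : ℂ) * z) • (1 : Matrix (Fin 3) (Fin 3) ℂ)) :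
              Matrix (Fin 3) (Fin 3 ⊕ Fin 3) ℂ))) *ᵥ
      Sum.elim vL' iL' :=
  incremental_remote_current_general Y YF YJ YC vF vF' vJ vJ' vC vC' vS vS' iC iC' iS iS' vL' iL' z
    m_T D_R D_F x σ hfault hpre hvS hiC hinv hx hlineKVL hσ
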